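/- Let A_in, A_on be disjoint finite sets with |A_on| = d+1 ≥ 1, let g ≥ 2, and let T be any set of d+1 distinct sets Q satisfying A_in ⊆ Q ⊆ A_in ∪ A_on and |Q| = |A_in| + g. Then |⋂ T| ≠ |A_in| + g − 1. -/

import Mathlib

/-!
Let `K` be the common intersection of the sets in `T`. If `|K| = |Ain| + g - 1`, every `Q ∈ T`
is `K` plus exactly one point of `(Ain ∪ Aon) \ K`, and distinct `Q` give distinct points. Hence
`d + 1 = |T| ≤ |Ain ∪ Aon| - |K| ≤ d + 2 - g`, impossible for `g ≥ 2`.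
-/

namespace Finset

variable {α : Type*} [DecidableEq α]

theorem coe_inf'_id {T : Finset (Finset α)} (hT : T.Nonempty) :
    ((T.inf' hT id : Finset α) : Set α) = ⋂ Q ∈ T, (Q : Set α) := by
  ext x
  simp [mem_inf']

theorem card_le_card_sdiff_of_card_sdiff_eq_one {T : Finset (Finset α)} {K S : Finset α}
    (hKQ : ∀ Q ∈ T, K ⊆ Q) (hQS : ∀ Q ∈ T, Q ⊆ S) (hone : ∀ Q ∈ T, #(Q \ K) = 1) :
    #T ≤ #(S \ K) := by
  have hmaps : Set.MapsTo (· \ K) (T : Set (Finset α)) ((S \ K).powersetCard 1 : Finset _) :=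
    fun Q hQ => mem_powersetCard.mpr ⟨sdiff_subset_sdiff (hQS Q hQ) subset_rfl, hone Q hQ⟩
  have hinj : Set.InjOn (· \ K) (T : Set (Finset α)) := fun Q₁ h₁ Q₂ h₂ heq => by
    rw [← union_sdiff_of_subset (hKQ Q₁ h₁), ← union_sdiff_of_subset (hKQ Q₂ h₂)]
    exact congrArg (K ∪ ·) heq
  simpa using card_le_card_of_injOn _ hmaps hinj

end Finset

open Finset in
theorem stmt_5_general {α : Type*} [DecidableEq α] (Ain Aon : Finset α) (d g : ℕ)
    (hcard : Aon.card = d + 1) (hg : 2 ≤ g)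
    (T : Finset (Finset α)) (hT : T.card = d + 1)
    (hQ : ∀ Q ∈ T, Ain ⊆ Q ∧ Q ⊆ Ain ∪ Aon ∧ Q.card = Ain.card + g) :
    (⋂ Q ∈ T, (Q : Set α)).ncard ≠ Ain.card + g - 1 := by
  have hne : T.Nonempty := card_pos.mp (by omega)
  rw [← coe_inf'_id hne, Set.ncard_coe_finset]
  have hKQ : ∀ Q ∈ T, T.inf' hne id ⊆ Q := fun Q hQT => inf'_le id hQT
  have hAinK : Ain ⊆ T.inf' hne id := le_inf' hne id fun Q hQT => (hQ Q hQT).1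
  generalize T.inf' hne id = K at hKQ hAinK ⊢
  intro hK
  have hone : ∀ Q ∈ T, #(Q \ K) = 1 := fun Q hQT => by
    rw [card_sdiff_of_subset (hKQ Q hQT), (hQ Q hQT).2.2, hK]
    omega
  have hle := card_le_card_sdiff_of_card_sdiff_eq_one hKQ (fun Q hQT => (hQ Q hQT).2.1) hone
  obtain ⟨Q₀, hQ₀⟩ := hne
  rw [card_sdiff_of_subset ((hKQ Q₀ hQ₀).trans (hQ Q₀ hQ₀).2.1)] at hle
  have hunion := card_union_le Ain Aon
  have hAinle := card_le_card hAinK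
  omega

/-- Let `Ain`, `Aon` be disjoint finite sets with `|Aon| = d+1 ≥ 1`, let
`g ≥ 2`, and let `T` be any set of `d+1` distinct sets `Q` with `Ain ⊆ Q ⊆ Ain ∪ Aon`
and `|Q| = |Ain| + g`. Then `|⋂ T| ≠ |Ain| + g − 1`. -/
theorem stmt_5 {α : Type*} [DecidableEq α] (Ain Aon : Finset α) (d g : ℕ)
    (hdisj : Disjoint Ain Aon) (hcard : Aon.card = d + 1) (hg : 2 ≤ g)
    (T : Finset (Finset α)) (hT : T.card = d + 1)
    (hQ : ∀ Q ∈ T, Ain ⊆ Q ∧ Q ⊆ Ain ∪ Aon ∧ Q.card = Ain.card + g) :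
    (⋂ Q ∈ T, (Q : Set α)).ncard ≠ Ain.card + g - 1 :=
  stmt_5_general Ain Aon d g hcard hg T hT hQ
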